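/- arXiv:1308.0218 — 2 statements merged into one kernel-verified Lean document; each statement's English description precedes it below -/
import Mathlib

section
/- Let A be a unital ring, let F be a finitely generated projective full A-module, and let E and E' be finitely generated projective A-modules. Then E and E' are stably isomorphic (i.e., there exists a finitely generated projective A-module G with E ⊕ G ≅ E' ⊕ G) if and only if there exists k ∈ ℕ such that E ⊕ F^k ≅ E' ⊕ F^k. -/
/-!
A finitely generated projective `G` is a direct summand of a free module `A^n`. Fullness of `F`
gives a surjection `F^m → A`, which splits, so `A`, hence `A^n`, hence `G`, is a direct summand
of `F^(nm)`; adding the complement of `G` to both sides of `E ⊕ G ≅ E' ⊕ G` yields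
`E ⊕ F^(nm) ≅ E' ⊕ F^(nm)`. Conversely `G = F^k` is finitely generated projective.
-/

universe u v

/-- An `A`-module `F` is *full* if the span of `{ℓ x : x ∈ F, ℓ ∈ Hom_A(F, A)}` is all of `A`. -/
def IsFullModule (A : Type u) [Ring A] (F : Type v) [AddCommGroup F] [Module A F] : Prop :=
  Submodule.span A {y : A | ∃ (ℓ : F →ₗ[A] A) (x : F), ℓ x = y} = ⊤

open Function

section

variable {R : Type*} [Ring R] {M N P K : Type*} [AddCommGroup M] [Module R M]
  [AddCommGroup N] [Module R N] [AddCommGroup P] [Module R P] [AddCommGroup K] [Module R K]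

instance Module.Projective.pi_fintype {ι : Type*} [Fintype ι] [DecidableEq ι]
    [Module.Projective R M] : Module.Projective R (ι → M) :=
  .of_equiv (DFinsupp.linearEquivFunOnFintype (R := R) (M := fun _ : ι => M))

theorem Module.Projective.nonempty_linearEquiv_ker_prod [Module.Projective R P]
    {f : M →ₗ[R] P} (hf : Surjective f) : Nonempty (M ≃ₗ[R] LinearMap.ker f × P) :=
  have ⟨l, hl⟩ := Module.projective_lifting_property f .id hf
  ⟨((LinearMap.exact_subtype_ker_map f).splitSurjectiveEquiv
    (Submodule.injective_subtype _) ⟨l, hl⟩).1⟩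

theorem IsFullModule.exists_surjective (hF : IsFullModule R M) :
    ∃ (m : ℕ) (Φ : (Fin m → M) →ₗ[R] R), Surjective Φ := by
  obtain ⟨m, c, g, hg⟩ := Submodule.mem_span_set'.mp (hF ▸ Submodule.mem_top : (1 : R) ∈ _)
  choose ℓ x hx using fun i => (g i).2
  let Φ : (Fin m → M) →ₗ[R] R := ∑ i, ℓ i ∘ₗ LinearMap.proj i
  -- the range of `Φ` is a left ideal containing `1 = Φ (fun i => c i • x i)`
  refine ⟨m, Φ, LinearMap.range_eq_top.mp <| (Ideal.eq_top_iff_one _).mpr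
    ⟨fun i => c i • x i, ?_⟩⟩
  simp [Φ, hx, ← hg]

def LinearEquiv.arrowProdEquivProdArrow (ι : Type*) : (ι → M × N) ≃ₗ[R] (ι → M) × (ι → N) :=
  { Equiv.arrowProdEquivProdArrow ι (fun _ => M) (fun _ => N) with
    map_add' := fun _ _ => rfl
    map_smul' := fun _ _ => rfl }

def LinearEquiv.finMulArrowProd {m : ℕ} (s : (Fin m → M) ≃ₗ[R] N × P) (n : ℕ) :
    (Fin (n * m) → M) ≃ₗ[R] (Fin n → N) × (Fin n → P) :=
  (LinearEquiv.funCongrLeft R M finProdFinEquiv).trans <| (LinearEquiv.curry R M _ _).trans <|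
    (LinearEquiv.piCongrRight fun _ => s).trans (LinearEquiv.arrowProdEquivProdArrow _)

variable {E E' : Type*} [AddCommGroup E] [Module R E] [AddCommGroup E'] [Module R E']

def LinearEquiv.stabilizeBySummand (e : (E × P) ≃ₗ[R] (E' × P)) (s : M ≃ₗ[R] K × P) :
    (E × M) ≃ₗ[R] (E' × M) :=
  let t : M ≃ₗ[R] P × K := s.trans (LinearEquiv.prodComm R K P)
  ((LinearEquiv.refl R E).prodCongr t).trans <| (LinearEquiv.prodAssoc R E P K).symm.trans <|
    (e.prodCongr (LinearEquiv.refl R K)).trans <| (LinearEquiv.prodAssoc R E' P K).trans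
      ((LinearEquiv.refl R E').prodCongr t.symm)

end

theorem stablyIsomorphic_iff_exists_full_stabilization_general
    (A : Type u) [Ring A]
    (F : Type v) [AddCommGroup F] [Module A F]
    [Module.Finite A F] [Module.Projective A F] (hF : IsFullModule A F)
    (E : Type v) [AddCommGroup E] [Module A E]
    (E' : Type v) [AddCommGroup E'] [Module A E'] :
    (∃ (G : Type v) (_ : AddCommGroup G) (_ : Module A G),
        Module.Finite A G ∧ Module.Projective A G ∧ Nonempty ((E × G) ≃ₗ[A] (E' × G)))
      ↔ ∃ k : ℕ, Nonempty ((E × (Fin k → F)) ≃ₗ[A] (E' × (Fin k → F))) := by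
  constructor
  · rintro ⟨G, _, _, _, _, ⟨e⟩⟩
    obtain ⟨n, f, hf⟩ := Module.Finite.exists_fin' A G
    obtain ⟨sG⟩ := Module.Projective.nonempty_linearEquiv_ker_prod hf
    obtain ⟨m, Φ, hΦ⟩ := hF.exists_surjective
    obtain ⟨sF⟩ := Module.Projective.nonempty_linearEquiv_ker_prod hΦ
    exact ⟨n * m, ⟨(e.stabilizeBySummand sG).stabilizeBySummand (sF.finMulArrowProd n)⟩⟩
  · rintro ⟨k, e⟩
    exact ⟨Fin k → F, inferInstance, inferInstance, inferInstance, inferInstance, e⟩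

/-- Let `A` be a unital ring, `F` a finitely generated projective full `A`-module, and `E`, `E'`
finitely generated projective `A`-modules.  Then `E` and `E'` are stably isomorphic iff there is
`k ∈ ℕ` with `E ⊕ F^k ≅ E' ⊕ F^k`. -/
theorem stablyIsomorphic_iff_exists_full_stabilization
    (A : Type u) [Ring A]
    (F : Type v) [AddCommGroup F] [Module A F]
    [Module.Finite A F] [Module.Projective A F] (hF : IsFullModule A F)
    (E : Type v) [AddCommGroup E] [Module A E] [Module.Finite A E] [Module.Projective A E]
    (E' : Type v) [AddCommGroup E'] [Module A E'] [Module.Finite A E'] [Module.Projective A E'] :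
    (∃ (G : Type v) (_ : AddCommGroup G) (_ : Module A G),
        Module.Finite A G ∧ Module.Projective A G ∧ Nonempty ((E × G) ≃ₗ[A] (E' × G)))
      ↔ ∃ k : ℕ, Nonempty ((E × (Fin k → F)) ≃ₗ[A] (E' × (Fin k → F))) :=
  stablyIsomorphic_iff_exists_full_stabilization_general A F hF E E'
end

section
/- Let A be a ring and let M₁, M₂ be A-modules. Suppose there exists k ∈ ℕ such that M₁^k ⊕ M₁ ≅ M₁^k ⊕ M₂ and M₁ ⊕ M₂^k ≅ M₂ ⊕ M₂^k. Then M₁^{2k} ≅ M₂^{2k}. (The key intermediate step is that M₁^{a+1} ⊕ M₂^b ≅ M₁^a ⊕ M₂^{b+1} as soon as a ≥ k or b ≥ k.) -/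
/-!
An isomorphism `P ⊕ M ≅ P ⊕ N` can be applied to one coordinate of `P ⊕ Mⁱ` at a time, giving
`P ⊕ Mⁱ ≅ P ⊕ Nⁱ` for every finite `ι`. With `P = M₁^k`, resp. `P = M₂^k`, and `ι = Fin k` this
gives `M₁^(2k) ≅ M₁^k ⊕ M₁^k ≅ M₁^k ⊕ M₂^k ≅ M₂^k ⊕ M₂^k ≅ M₂^(2k)`.
-/

universe u v

section

variable {R : Type*} [Semiring R] {P M N X Y : Type*}
  [AddCommMonoid P] [Module R P] [AddCommMonoid M] [Module R M] [AddCommMonoid N] [Module R N]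
  [AddCommMonoid X] [Module R X] [AddCommMonoid Y] [Module R Y]

variable (X) in
def LinearEquiv.prodCongrInnerLeft (e : (P × M) ≃ₗ[R] (P × N)) :
    (P × (M × X)) ≃ₗ[R] (P × (N × X)) :=
  (LinearEquiv.prodAssoc R P M X).symm ≪≫ₗ e.prodCongr (LinearEquiv.refl R X) ≪≫ₗ
    LinearEquiv.prodAssoc R P N X

def LinearEquiv.prodCongrInner (e : (P × M) ≃ₗ[R] (P × N))
    (f : (P × X) ≃ₗ[R] (P × Y)) : (P × (M × X)) ≃ₗ[R] (P × (N × Y)) :=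
  e.prodCongrInnerLeft X ≪≫ₗ (LinearEquiv.refl R P).prodCongr (LinearEquiv.prodComm R N X) ≪≫ₗ
    f.prodCongrInnerLeft N ≪≫ₗ (LinearEquiv.refl R P).prodCongr (LinearEquiv.prodComm R Y N)

theorem nonempty_prod_pi_linearEquiv_of_prod (e : (P × M) ≃ₗ[R] (P × N)) (ι : Type*)
    [Finite ι] : Nonempty ((P × (ι → M)) ≃ₗ[R] (P × (ι → N))) := by
  induction ι using Finite.induction_empty_option with
  | of_equiv σ h =>
    obtain ⟨f⟩ := h
    exact ⟨(LinearEquiv.refl R P).prodCongr (LinearEquiv.funCongrLeft R M σ) ≪≫ₗ f ≪≫ₗ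
      (LinearEquiv.refl R P).prodCongr (LinearEquiv.funCongrLeft R N σ.symm)⟩
  | h_empty =>
    exact ⟨(LinearEquiv.refl R P).prodCongr (LinearEquiv.ofSubsingleton _ _)⟩
  | h_option h =>
    obtain ⟨f⟩ := h
    exact ⟨(LinearEquiv.refl R P).prodCongr (LinearEquiv.piOptionEquivProd R) ≪≫ₗ
      e.prodCongrInner f ≪≫ₗ
      (LinearEquiv.refl R P).prodCongr (LinearEquiv.piOptionEquivProd R (M := fun _ ↦ N)).symm⟩

variable (R M) in
def LinearEquiv.piFinTwoMul (k : ℕ) : (Fin (2 * k) → M) ≃ₗ[R] (Fin k → M) × (Fin k → M) :=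
  LinearEquiv.funCongrLeft R M (finSumFinEquiv.trans (finCongr (two_mul k).symm)) ≪≫ₗ
    LinearEquiv.sumArrowLequivProdArrow (Fin k) (Fin k) R M

end

/-- Let `A` be a ring and `M₁`, `M₂` two `A`-modules.  If for some `k ∈ ℕ` one has
`M₁^k ⊕ M₁ ≅ M₁^k ⊕ M₂` and `M₁ ⊕ M₂^k ≅ M₂ ⊕ M₂^k`, then `M₁^(2k) ≅ M₂^(2k)`. -/
theorem power_isomorphic_of_cancellation
    (A : Type u) [Ring A]
    (M₁ : Type v) [AddCommGroup M₁] [Module A M₁]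
    (M₂ : Type v) [AddCommGroup M₂] [Module A M₂]
    (k : ℕ)
    (h₁ : Nonempty (((Fin k → M₁) × M₁) ≃ₗ[A] ((Fin k → M₁) × M₂)))
    (h₂ : Nonempty ((M₁ × (Fin k → M₂)) ≃ₗ[A] (M₂ × (Fin k → M₂)))) :
    Nonempty ((Fin (2 * k) → M₁) ≃ₗ[A] (Fin (2 * k) → M₂)) := by
  obtain ⟨e₁⟩ := h₁
  obtain ⟨e₂⟩ := h₂
  obtain ⟨f₁⟩ := nonempty_prod_pi_linearEquiv_of_prod e₁ (Fin k)
  obtain ⟨f₂⟩ := nonempty_prod_pi_linearEquiv_of_prod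
    (LinearEquiv.prodComm A _ _ ≪≫ₗ e₂ ≪≫ₗ LinearEquiv.prodComm A _ _) (Fin k)
  exact ⟨LinearEquiv.piFinTwoMul A M₁ k ≪≫ₗ f₁ ≪≫ₗ LinearEquiv.prodComm A _ _ ≪≫ₗ f₂ ≪≫ₗ
    (LinearEquiv.piFinTwoMul A M₂ k).symm⟩
end
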